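/- arXiv:2203.11356 — 3 statements merged into one kernel-verified Lean document; each statement's English description precedes it below -/
import Mathlib

section
/- Let X be an affine variety over an algebraically closed field K of characteristic zero, and let L be a subspace of the Lie algebra VF(X) of algebraic vector fields (derivations of O(X)). If L is locally finite as a set of linear endomorphisms of O(X) (i.e., every f in O(X) lies in a finite-dimensional subspace invariant under all elements of L), then L is finite dimensional. -/
/-!
A derivation is determined by its values on a finite generating set `s` of the algebra. Local
finiteness puts `δ x`, for every `δ ∈ L` and `x ∈ s`, into one finite-dimensional subspace `W x`
(any invariant one containing `x`), so evaluation at the generators embeds `L` into `Π x : s, W x`.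
-/

namespace Derivation

variable {R A M : Type*} [CommRing R] [CommRing A] [Algebra R A]
  [AddCommGroup M] [Module A M] [Module R M]

theorem restrict_injective_of_adjoin_eq_top {s : Set A} (hs : Algebra.adjoin R s = ⊤) :
    Function.Injective fun D : Derivation R A M => s.domRestrict D :=
  fun _ _ h => ext_of_adjoin_eq_top s hs fun x hx => congrFun h ⟨x, hx⟩

theorem finite_submodule_of_forall_apply_mem [IsScalarTower R A M] [IsNoetherianRing R] {s : Set A} [Finite s]
    (hs : Algebra.adjoin R s = ⊤) (L : Submodule R (Derivation R A M))
    (W : A → Submodule R M) [∀ x, Module.Finite R (W x)]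
    (hLW : ∀ x ∈ s, ∀ D ∈ L, D x ∈ W x) : Module.Finite R L := by
  let evalGenerators : L →ₗ[R] ∀ x : s, W x :=
    { toFun := fun D x => ⟨D.1 x, hLW x x.2 D D.2⟩
      map_add' := fun _ _ => rfl
      map_smul' := fun _ _ => rfl }
  refine Module.Finite.of_injective evalGenerators fun D₁ D₂ h => ?_
  refine Subtype.ext (restrict_injective_of_adjoin_eq_top hs (funext fun x => ?_))
  exact congrArg Subtype.val (congrFun h x)

end Derivation

theorem locallyFinite_subspace_of_derivations_finiteDimensional_general
    (K : Type*) [Field K]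
    (A : Type*) [CommRing A] [Algebra K A] [Algebra.FiniteType K A]
    (L : Submodule K (Derivation K A A))
    (hL : ∀ f : A, ∃ W : Submodule K A, FiniteDimensional K W ∧ f ∈ W ∧
      ∀ δ ∈ L, ∀ w ∈ W, δ w ∈ W) :
    FiniteDimensional K L := by
  obtain ⟨s, hs⟩ := Algebra.FiniteType.out (R := K) (A := A)
  choose W hW_fin hW_mem hW_inv using hL
  have : ∀ f, FiniteDimensional K (W f) := hW_fin
  exact Derivation.finite_submodule_of_forall_apply_mem hs L W
    fun x _ δ hδ => hW_inv x δ hδ x (hW_mem x)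

/-- If `L` is a subspace of the derivations of the coordinate ring of an
affine variety (a finitely generated integral domain over an algebraically closed field
of characteristic zero) which is locally finite, then `L` is finite dimensional. -/
theorem locallyFinite_subspace_of_derivations_finiteDimensional
    (K : Type*) [Field K] [IsAlgClosed K] [CharZero K]
    (A : Type*) [CommRing A] [IsDomain A] [Algebra K A] [Algebra.FiniteType K A]
    (L : Submodule K (Derivation K A A))
    (hL : ∀ f : A, ∃ W : Submodule K A, FiniteDimensional K W ∧ f ∈ W ∧
      ∀ δ ∈ L, ∀ w ∈ W, δ w ∈ W) :
    FiniteDimensional K L :=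
  locallyFinite_subspace_of_derivations_finiteDimensional_general K A L hL
end

section
/- Let δ be a locally finite endomorphism of a K-vector space A with Jordan decomposition δ = δ_s + δ_n (δ_s semisimple, δ_n locally nilpotent, commuting). If A is a commutative K-algebra and δ is a derivation, and A is generated by a finite-dimensional δ-invariant subspace V, then δ_s and δ_n are again derivations of A. -/
/-!
Write `G μ` for the generalized `μ`-eigenspace of `δ` and `E μ` for the `μ`-eigenspace of `δs`.
On `E μ` the operator `δ - μ = δn` is locally nilpotent, so `E μ ≤ G μ`; since the `E μ` span `A`
and the `G μ` are independent, `E = G`. The generalized eigenspaces of a derivation multiply,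
`G μ * G ν ≤ G (μ + ν)`, because `δ ∘ mul = mul ∘ (δ ⊗ 1 + 1 ⊗ δ)` and `a ⊗ b` is a generalized
eigenvector of the two commuting summands. Hence `δs` multiplies a product of eigenvectors
by the sum of their eigenvalues, which is the Leibniz rule on eigenvectors; it extends to all of
`A` by bilinearity, and `δn = δ - δs` is then a difference of derivations.
-/

open Module TensorProduct

namespace Module.End

variable {R M N : Type*} [CommRing R] [AddCommGroup M] [Module R M] [AddCommGroup N] [Module R N]

lemma apply_mem_maxGenEigenspace_of_comp_eq {f : End R M} {g : End R N} {φ : M →ₗ[R] N}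
    (h : g ∘ₗ φ = φ ∘ₗ f) {μ : R} {x : M} (hx : x ∈ f.maxGenEigenspace μ) :
    φ x ∈ g.maxGenEigenspace μ := by
  have hμ : (g - μ • 1) ∘ₗ φ = φ ∘ₗ (f - μ • 1) := by
    rw [LinearMap.sub_comp, LinearMap.comp_sub, h, LinearMap.smul_comp, LinearMap.comp_smul]
    rfl
  obtain ⟨k, hk⟩ := (mem_maxGenEigenspace f μ x).mp hx
  refine (mem_maxGenEigenspace g μ (φ x)).mpr ⟨k, ?_⟩
  rw [← LinearMap.comp_apply, commute_pow_left_of_commute hμ, LinearMap.comp_apply, hk, map_zero]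

lemma tmul_mem_maxGenEigenspace_rTensor {f : End R M} {μ : R} {x : M}
    (hx : x ∈ f.maxGenEigenspace μ) (y : N) :
    x ⊗ₜ[R] y ∈ maxGenEigenspace (f.rTensor N) μ :=
  apply_mem_maxGenEigenspace_of_comp_eq (φ := (TensorProduct.mk R M N).flip y) (by ext; rfl) hx

lemma tmul_mem_maxGenEigenspace_lTensor {g : End R N} {μ : R} {y : N}
    (hy : y ∈ g.maxGenEigenspace μ) (x : M) :
    x ⊗ₜ[R] y ∈ maxGenEigenspace (g.lTensor M) μ :=
  apply_mem_maxGenEigenspace_of_comp_eq (φ := TensorProduct.mk R M N x) (by ext; rfl) hy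

lemma tmul_mem_maxGenEigenspace_rTensor_add_lTensor {f : End R M} {g : End R N} {μ ν : R}
    {x : M} {y : N} (hx : x ∈ f.maxGenEigenspace μ) (hy : y ∈ g.maxGenEigenspace ν) :
    x ⊗ₜ[R] y ∈ maxGenEigenspace (f.rTensor N + g.lTensor M) (μ + ν) := by
  have hcomm : Commute (f.rTensor N) (g.lTensor M) := by
    ext; simp [mul_apply]
  exact genEigenspace_inf_le_add _ _ _ _ ⊤ ⊤ hcomm
    ⟨tmul_mem_maxGenEigenspace_rTensor hx y, tmul_mem_maxGenEigenspace_lTensor hy x⟩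

lemma eigenspace_le_maxGenEigenspace_add {s n : End R M} (hcomm : Commute s n)
    (hn : ∀ x : M, ∃ k : ℕ, (n ^ k) x = 0) (μ : R) :
    s.eigenspace μ ≤ (s + n).maxGenEigenspace μ := by
  intro x hx
  have hx₀ : x ∈ n.maxGenEigenspace 0 := by
    obtain ⟨k, hk⟩ := hn x
    exact (mem_maxGenEigenspace n 0 x).mpr ⟨k, by simpa using hk⟩
  simpa using genEigenspace_inf_le_add s n μ 0 1 ⊤ hcomm ⟨hx, hx₀⟩

lemma eigenspace_eq_maxGenEigenspace_add [IsDomain R] [IsTorsionFree R M] {s n : End R M}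
    (hcomm : Commute s n) (hn : ∀ x : M, ∃ k : ℕ, (n ^ k) x = 0)
    (hs : ⨆ μ, s.eigenspace μ = ⊤) :
    s.eigenspace = (s + n).maxGenEigenspace :=
  ((independent_maxGenEigenspace (s + n)).le_iff_eq_of_iSup_eq_top hs).mp
    (eigenspace_le_maxGenEigenspace_add hcomm hn)

lemma leibniz_of_mul_mem_eigenspace {A : Type*} [Ring A] [Algebra R A] {f : End R A}
    (hf : ⨆ μ, f.eigenspace μ = ⊤)
    (hmul : ∀ μ ν a b, a ∈ f.eigenspace μ → b ∈ f.eigenspace ν →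
      a * b ∈ f.eigenspace (μ + ν))
    (a b : A) : f (a * b) = a * f b + f a * b := by
  have hmem (x : A) : x ∈ ⨆ μ, f.eigenspace μ := hf ▸ Submodule.mem_top
  induction hmem a using Submodule.iSup_induction' with
  | mem μ a ha =>
    induction hmem b using Submodule.iSup_induction' with
    | mem ν b hb =>
      rw [mem_eigenspace_iff.mp (hmul μ ν a b ha hb), mem_eigenspace_iff.mp ha,
        mem_eigenspace_iff.mp hb, add_smul, smul_mul_assoc, mul_smul_comm, add_comm]
    | zero => simp
    | add x y _ _ hx hy => simp only [mul_add, map_add, hx, hy]; abel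
  | zero => simp
  | add x y _ _ hx hy => simp only [add_mul, map_add, hx, hy]; abel

end Module.End

namespace Derivation

variable {R A : Type*} [CommRing R] [CommRing A] [Algebra R A] (D : Derivation R A A)

lemma toLinearMap_comp_mul' :
    (D : End R A) ∘ₗ LinearMap.mul' R A =
      LinearMap.mul' R A ∘ₗ ((D : End R A).rTensor A + (D : End R A).lTensor A) := by
  ext x y
  simp [D.leibniz, mul_comm, add_comm]

lemma mul_mem_maxGenEigenspace {μ ν : R} {a b : A}
    (ha : a ∈ End.maxGenEigenspace (D : End R A) μ)
    (hb : b ∈ End.maxGenEigenspace (D : End R A) ν) :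
    a * b ∈ End.maxGenEigenspace (D : End R A) (μ + ν) :=
  End.apply_mem_maxGenEigenspace_of_comp_eq D.toLinearMap_comp_mul'
    (End.tmul_mem_maxGenEigenspace_rTensor_add_lTensor ha hb)

end Derivation

theorem jordan_parts_of_derivation_are_derivations_general
    (K : Type*) [Field K]
    (A : Type*) [CommRing A] [Algebra K A]
    (δ : Derivation K A A)
    (δs δn : Module.End K A)
    (hsum : (δ.toLinearMap : Module.End K A) = δs + δn)
    (hcomm : Commute δs δn)
    (hs : (⨆ a : K, Module.End.eigenspace δs a) = ⊤)
    (hn : ∀ a : A, ∃ m : ℕ, (δn ^ m) a = 0) :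
    (∀ a b : A, δs (a * b) = a * δs b + δs a * b) ∧
    (∀ a b : A, δn (a * b) = a * δn b + δn a * b) := by
  have hE : δs.eigenspace = Module.End.maxGenEigenspace (δ : Module.End K A) := by
    rw [hsum]; exact Module.End.eigenspace_eq_maxGenEigenspace_add hcomm hn hs
  have hδs : ∀ a b : A, δs (a * b) = a * δs b + δs a * b :=
    Module.End.leibniz_of_mul_mem_eigenspace hs <| by
      rw [hE]; exact fun μ ν a b ↦ δ.mul_mem_maxGenEigenspace
  refine ⟨hδs, fun a b ↦ ?_⟩
  have hδn (x : A) : δn x = δ x - δs x := by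
    rw [eq_sub_iff_add_eq', ← LinearMap.add_apply, ← hsum]; rfl
  rw [hδn, hδn, hδn, δ.leibniz, hδs, smul_eq_mul, smul_eq_mul]
  ring

/-- If `δ` is a locally finite derivation of a commutative algebra generated
by a finite-dimensional `δ`-invariant subspace, with Jordan decomposition
`δ = δs + δn` (`δs` semisimple, `δn` locally nilpotent, commuting), then `δs` and `δn`
are again derivations. -/
theorem jordan_parts_of_derivation_are_derivations
    (K : Type*) [Field K] [IsAlgClosed K] [CharZero K]
    (A : Type*) [CommRing A] [Algebra K A]
    (V : Submodule K A) (hVfin : FiniteDimensional K V)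
    (hVgen : Algebra.adjoin K (V : Set A) = ⊤)
    (δ : Derivation K A A) (hδV : ∀ v ∈ V, δ v ∈ V)
    (δs δn : Module.End K A)
    (hsum : (δ.toLinearMap : Module.End K A) = δs + δn)
    (hcomm : Commute δs δn)
    (hs : (⨆ a : K, Module.End.eigenspace δs a) = ⊤)
    (hn : ∀ a : A, ∃ m : ℕ, (δn ^ m) a = 0) :
    (∀ a b : A, δs (a * b) = a * δs b + δs a * b) ∧
    (∀ a b : A, δn (a * b) = a * δn b + δn a * b) :=
  jordan_parts_of_derivation_are_derivations_general K A δ δs δn hsum hcomm hs hn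
end

section
/- Consider the polynomial automorphism φ = u∘v of the affine plane over K, where u = (x + y², y) and v = (x, y + x²), so φ(x,y) = (x + y² + 2x²y + y⁴, y + x²). Writing φ^k = (f_k, h_k), all coefficients of f_k and h_k are non-negative integers, and for every k ≥ 1 the polynomial f_k contains the monomial y^{3k−1} with a nonzero (positive) coefficient. -/
/-!
Over `ℕ` nothing cancels: in a zero-sum-free semiring without zero divisors the support of
`p + q` contains that of `p`, and the support of `p * q` contains the sums of exponents from the
supports of `p` and `q`. Running the recursion over `ℕ` gives the integrality and non-negativity
at once. Since `y ∈ h_k` for all `k` and `y² ∈ h_k² ⊆ f_{k+1}`, the term `2 f_k² h_k` of `f_{k+1}`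
contains `y² · y^(3k-1) · y = y^(3k+2)` as soon as `y^(3k-1) ∈ f_k`.
-/

open MvPolynomial

noncomputable def phiIter : ℕ → MvPolynomial (Fin 2) ℚ × MvPolynomial (Fin 2) ℚ
  | 0 => (X 0, X 1)
  | k + 1 =>
      let f := (phiIter k).1
      let h := (phiIter k).2
      (f + h ^ 2 + 2 * f ^ 2 * h + h ^ 4, h + f ^ 2)

namespace MvPolynomial

variable {σ R : Type*} [CommSemiring R] [Subsingleton (AddUnits R)]

theorem mem_support_add_left {p : MvPolynomial σ R} {m : σ →₀ ℕ} (hp : m ∈ p.support)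
    (q : MvPolynomial σ R) : m ∈ (p + q).support := by
  rw [mem_support_iff, coeff_add] at *
  exact fun h => hp (add_eq_zero.mp h).1

theorem mem_support_add_right {q : MvPolynomial σ R} {m : σ →₀ ℕ} (hq : m ∈ q.support)
    (p : MvPolynomial σ R) : m ∈ (p + q).support :=
  add_comm q p ▸ mem_support_add_left hq p

theorem add_mem_support_mul [NoZeroDivisors R] {p q : MvPolynomial σ R} {a b : σ →₀ ℕ}
    (ha : a ∈ p.support) (hb : b ∈ q.support) : a + b ∈ (p * q).support := by
  classical
  rw [mem_support_iff] at *
  rw [coeff_mul, Ne, Finset.sum_eq_zero_iff]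
  intro h
  exact mul_ne_zero ha hb (h (a, b) (Finset.HasAntidiagonal.mem_antidiagonal.mpr rfl))

end MvPolynomial

noncomputable def phiIterNat : ℕ → MvPolynomial (Fin 2) ℕ × MvPolynomial (Fin 2) ℕ
  | 0 => (X 0, X 1)
  | k + 1 =>
      let f := (phiIterNat k).1
      let h := (phiIterNat k).2
      (f + h ^ 2 + 2 * f ^ 2 * h + h ^ 4, h + f ^ 2)

theorem phiIter_eq_map_phiIterNat (k : ℕ) :
    phiIter k = Prod.map (map (Nat.castRingHom ℚ)) (map (Nat.castRingHom ℚ)) (phiIterNat k) := by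
  induction k with
  | zero => simp [phiIter, phiIterNat]
  | succ k ih =>
    simp [phiIter, phiIterNat, ih]

theorem single_one_mem_support_phiIterNat_snd (k : ℕ) :
    Finsupp.single 1 1 ∈ (phiIterNat k).2.support := by
  induction k with
  | zero => simp [phiIterNat, support_X]
  | succ k ih => exact mem_support_add_left ih _

theorem single_two_mem_support_phiIterNat_succ_fst (k : ℕ) :
    Finsupp.single 1 2 ∈ (phiIterNat (k + 1)).1.support := by
  have hy := single_one_mem_support_phiIterNat_snd k
  have hy2 : Finsupp.single 1 2 ∈ ((phiIterNat k).2 ^ 2).support := by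
    simpa only [sq, ← Finsupp.single_add] using add_mem_support_mul hy hy
  exact mem_support_add_left (mem_support_add_left (mem_support_add_right hy2 _) _) _

theorem single_three_mul_sub_one_mem_support_phiIterNat_fst {k : ℕ} (hk : 1 ≤ k) :
    Finsupp.single 1 (3 * k - 1) ∈ (phiIterNat k).1.support := by
  induction k, hk using Nat.le_induction with
  | base => exact single_two_mem_support_phiIterNat_succ_fst 0
  | succ k hk ih =>
    obtain ⟨j, rfl⟩ : ∃ j, k = j + 1 := ⟨k - 1, by omega⟩
    set f := (phiIterNat (j + 1)).1
    set h := (phiIterNat (j + 1)).2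
    have hcubic : Finsupp.single 1 (3 * (j + 1 + 1) - 1) ∈ (f ^ 2 * h).support := by
      have hexp : Finsupp.single (1 : Fin 2) (3 * (j + 1 + 1) - 1) =
          Finsupp.single 1 2 + Finsupp.single 1 (3 * (j + 1) - 1) + Finsupp.single 1 1 := by
        rw [← Finsupp.single_add, ← Finsupp.single_add]
        congr 1
        omega
      rw [hexp, sq]
      exact add_mem_support_mul
        (add_mem_support_mul (single_two_mem_support_phiIterNat_succ_fst j) ih)
        (single_one_mem_support_phiIterNat_snd _)
    have htwice : 2 * f ^ 2 * h = f ^ 2 * h + f ^ 2 * h := by ring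
    show _ ∈ (f + h ^ 2 + 2 * f ^ 2 * h + h ^ 4).support
    rw [htwice]
    exact mem_support_add_left (mem_support_add_right (mem_support_add_left hcubic _) _) _

/-- All coefficients of `f_k` and `h_k` are non-negative integers, and for
`k ≥ 1` the polynomial `f_k` contains the monomial `y^(3k-1)` with positive coefficient. -/
theorem phiIter_coeffs_nonneg_and_contains_y_pow
    (k : ℕ) :
    (∀ m : Fin 2 →₀ ℕ, ∃ n : ℕ, coeff m (phiIter k).1 = (n : ℚ)) ∧
    (∀ m : Fin 2 →₀ ℕ, ∃ n : ℕ, coeff m (phiIter k).2 = (n : ℚ)) ∧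
    (1 ≤ k → 0 < coeff (Finsupp.single 1 (3 * k - 1)) (phiIter k).1) := by
  simp only [phiIter_eq_map_phiIterNat, Prod.map_fst, Prod.map_snd, coeff_map,
    Nat.coe_castRingHom]
  refine ⟨fun m => ⟨_, rfl⟩, fun m => ⟨_, rfl⟩, fun hk => ?_⟩
  exact Nat.cast_pos.mpr <| Nat.pos_of_ne_zero <|
    mem_support_iff.mp (single_three_mul_sub_one_mem_support_phiIterNat_fst hk)
end
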